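/- For κ > 0, the one-variable intertwining operator (χ_κ f)(x) = (1/Γ(κ)) ∫₀¹ (1-t)^{κ-1} f(tx) dt satisfies the intertwining relation T_κ(χ_κ f) = χ_κ(f') for every f ∈ C^∞(ℝ), where T_κ g(x) = g'(x) + κ(g(x)-g(0))/x. -/

import Mathlib

open MeasureTheory intervalIntegral Set Metric

private lemma contOnW (r : ℝ) : ContinuousOn (fun t : ℝ => (1 - t) ^ r) (Ioo 0 1) := by
  intro t ht
  exact ((Real.continuousAt_rpow_const (1 - t) r
      (Or.inl (by have := ht.2; intro h; nlinarith [sub_eq_zero.mp h]))).comp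
    (continuousAt_const.sub continuousAt_id)).continuousWithinAt

private lemma myrestrict_eq :
    (volume : Measure ℝ).restrict (uIoc (0:ℝ) 1) = volume.restrict (Ioo 0 1) := by
  rw [uIoc_of_le zero_le_one]
  exact (Measure.restrict_congr_set Ioo_ae_eq_Ioc).symm

private lemma aesmW (r : ℝ) {g : ℝ → ℂ} (hg : Continuous g) :
    AEStronglyMeasurable (fun t => ((1 - t) ^ r : ℝ) • g t)
      ((volume : Measure ℝ).restrict (uIoc (0:ℝ) 1)) := by
  rw [myrestrict_eq]
  exact ((contOnW r).smul hg.continuousOn).aestronglyMeasurable measurableSet_Ioo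

private lemma rpowII {r : ℝ} (hr : -1 < r) :
    IntervalIntegrable (fun t : ℝ => (1 - t) ^ r) volume 0 1 := by
  have h := ((intervalIntegral.intervalIntegrable_rpow' (a := 0) (b := 1) hr).comp_sub_left 1).symm
  simpa using h

private lemma smulII {r : ℝ} (hr : -1 < r) {g : ℝ → ℂ} (hg : Continuous g) :
    IntervalIntegrable (fun t => ((1 - t) ^ r : ℝ) • g t) volume 0 1 := by
  rw [intervalIntegrable_iff_integrableOn_Icc_of_le zero_le_one]
  have h1 : IntegrableOn (fun t : ℝ => (1 - t) ^ r) (Icc 0 1) volume := by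
    rw [← intervalIntegrable_iff_integrableOn_Icc_of_le zero_le_one]; exact rpowII hr
  exact h1.smul_continuousOn hg.continuousOn isCompact_Icc

private lemma J1 {κ : ℝ} (hκ : 0 < κ) : ∫ t in (0:ℝ)..1, (1 - t) ^ (κ - 1) = 1/κ := by
  have h := intervalIntegral.integral_comp_sub_left (a := 0) (b := 1)
    (fun u : ℝ => u ^ (κ - 1)) 1
  rw [h]
  norm_num
  rw [integral_rpow (Or.inl (by linarith))]
  rw [Real.zero_rpow (by linarith : κ - 1 + 1 ≠ 0), Real.one_rpow]
  ring_nf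

private lemma J2 {κ : ℝ} (hκ : 0 < κ) :
    ∫ t in (0:ℝ)..1, (1 - t) ^ (κ - 1) * t = 1/κ - 1/(κ+1) := by
  have h0 : (fun t : ℝ => (1 - t) ^ (κ - 1) * t)
      = fun t : ℝ => (fun u : ℝ => u ^ (κ - 1) * (1 - u)) (1 - t) := by
    funext t; ring_nf
  have h := intervalIntegral.integral_comp_sub_left (a := 0) (b := 1)
    (fun u : ℝ => u ^ (κ - 1) * (1 - u)) 1
  rw [h0, h]
  norm_num
  have h1 : ∀ u ∈ uIcc (0:ℝ) 1, u ^ (κ - 1) * (1 - u) = u ^ (κ - 1) - u ^ κ := by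
    intro u hu
    rcases eq_or_ne u 0 with rfl | hu0
    · simp [Real.zero_rpow (by linarith : κ ≠ 0)]
    · rw [mul_sub, mul_one, ← Real.rpow_add_one hu0]
      ring_nf
  rw [intervalIntegral.integral_congr h1,
    intervalIntegral.integral_sub (intervalIntegral.intervalIntegrable_rpow' (by linarith))
      (intervalIntegral.intervalIntegrable_rpow' (by linarith)),
    integral_rpow (Or.inl (by linarith)),
    integral_rpow (Or.inl (by linarith))]
  rw [Real.zero_rpow (by linarith : κ - 1 + 1 ≠ 0), Real.zero_rpow (by linarith : κ + 1 ≠ 0),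
    Real.one_rpow, Real.one_rpow]
  ring_nf

private lemma hasDerivI {κ : ℝ} (hκ : 0 < κ) {f : ℝ → ℂ} (hf : ContDiff ℝ (⊤ : ℕ∞) f) (x₀ : ℝ) :
    HasDerivAt (fun x : ℝ => ∫ t in (0:ℝ)..1, ((1 - t) ^ (κ - 1) : ℝ) • f (t * x))
      (∫ t in (0:ℝ)..1, ((1 - t) ^ (κ - 1) : ℝ) • (t • deriv f (t * x₀))) x₀ := by
  have hd : ∀ y, HasDerivAt f (deriv f y) y := fun y => (hf.differentiable (by simp) y).hasDerivAt
  have hcf : Continuous f := hf.continuous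
  have hcf' : Continuous (deriv f) := hf.continuous_deriv (by simp)
  -- bound
  set R : ℝ := |x₀| + 1 with hR
  obtain ⟨M, hM⟩ := (isCompact_Icc (a := -R) (b := R)).exists_bound_of_continuousOn
    hcf'.continuousOn
  have key := intervalIntegral.hasDerivAt_integral_of_dominated_loc_of_deriv_le
    (F := fun x t => ((1 - t) ^ (κ - 1) : ℝ) • f (t * x))
    (F' := fun x t => ((1 - t) ^ (κ - 1) : ℝ) • (t • deriv f (t * x)))
    (x₀ := x₀) (a := 0) (b := 1) (μ := volume)
    (bound := fun t => (1 - t) ^ (κ - 1) * M)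
    (ball_mem_nhds x₀ one_pos)
    (Filter.Eventually.of_forall fun x => aesmW _ (hcf.comp (continuous_id.mul continuous_const)))
    (smulII (by linarith) (hcf.comp (continuous_id.mul continuous_const)))
    (aesmW _ ((continuous_id.smul (hcf'.comp (continuous_id.mul continuous_const))) :
      Continuous fun t : ℝ => t • deriv f (t * x₀)))
    ?_ ((rpowII (by linarith)).mul_const M) ?_
  · exact key.2
  · -- bound
    rw [uIoc_of_le zero_le_one]
    refine Filter.Eventually.of_forall ?_
    intro t ht x hx
    have h1t : (0:ℝ) ≤ 1 - t := by linarith [ht.2]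
    have hw : (0:ℝ) ≤ (1 - t) ^ (κ - 1) := Real.rpow_nonneg h1t _
    rw [norm_smul, norm_smul]
    simp only [Real.norm_eq_abs, abs_of_nonneg hw, abs_of_nonneg ht.1.le]
    have htx : t * x ∈ Icc (-R) R := by
      have hx' : |x| ≤ R := by
        have h1 : |x - x₀| < 1 := mem_ball_iff_norm.mp hx
        have h2 := abs_sub_abs_le_abs_sub x x₀
        rw [hR]; linarith
      have habs : |t * x| ≤ R := by
        rw [abs_mul, abs_of_nonneg ht.1.le]
        calc t * |x| ≤ 1 * |x| := mul_le_mul_of_nonneg_right ht.2 (abs_nonneg x)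
          _ = |x| := one_mul _
          _ ≤ R := hx'
      exact mem_Icc.mpr (abs_le.mp habs)
    have hnorm : ‖deriv f (t * x)‖ ≤ M := hM _ htx
    have hM0 : 0 ≤ M := le_trans (norm_nonneg _) hnorm
    calc (1 - t) ^ (κ - 1) * (t * ‖deriv f (t * x)‖)
        ≤ (1 - t) ^ (κ - 1) * (1 * M) := by
          apply mul_le_mul_of_nonneg_left _ hw
          exact mul_le_mul ht.2 hnorm (norm_nonneg _) one_pos.le
      _ = (1 - t) ^ (κ - 1) * M := by ring
  · -- differentiability
    refine Filter.Eventually.of_forall ?_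
    intro t _ x _
    have h2 : HasDerivAt (fun y : ℝ => t * y) t x := by
      simpa using (hasDerivAt_id x).const_mul t
    have h3 := (hd (t * x)).scomp x h2
    exact h3.const_smul ((1 - t) ^ (κ - 1) : ℝ)

private lemma IBP {κ : ℝ} (hκ : 0 < κ) {f : ℝ → ℂ} (hf : ContDiff ℝ (⊤ : ℕ∞) f) (x : ℝ) :
    (κ : ℝ) • ∫ t in (0:ℝ)..1, ((1 - t) ^ (κ - 1) : ℝ) • (f (t * x) - f 0)
      = x • ∫ t in (0:ℝ)..1, ((1 - t) ^ κ : ℝ) • deriv f (t * x) := by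
  have hd : ∀ y, HasDerivAt f (deriv f y) y := fun y => (hf.differentiable (by simp) y).hasDerivAt
  have hcf : Continuous f := hf.continuous
  have hcf' : Continuous (deriv f) := hf.continuous_deriv (by simp)
  have hg : Continuous (fun t : ℝ => f (t * x) - f 0) :=
    (hcf.comp (continuous_id.mul continuous_const)).sub continuous_const
  have hg' : Continuous (fun t : ℝ => x • deriv f (t * x)) :=
    (hcf'.comp (continuous_id.mul continuous_const)).const_smul x
  set u : ℝ → ℂ := fun t => ((1 - t) ^ κ : ℝ) • (f (t * x) - f 0) with hu
  set u' : ℝ → ℂ := fun t =>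
    ((1 - t) ^ κ : ℝ) • (x • deriv f (t * x))
      + (-(κ * (1 - t) ^ (κ - 1))) • (f (t * x) - f 0) with hu'
  have hcWκ : Continuous (fun t : ℝ => (1 - t) ^ κ) := by
    rw [continuous_iff_continuousAt]; intro t
    exact (Real.continuousAt_rpow_const (1 - t) κ (Or.inr hκ.le)).comp
      (continuousAt_const.sub continuousAt_id)
  have hcont : ContinuousOn u (Icc 0 1) := (hcWκ.smul hg).continuousOn
  have hderiv : ∀ t ∈ Ioo (0:ℝ) 1, HasDerivWithinAt u (u' t) (Ioi t) t := by
    intro t ht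
    have h1t : (1:ℝ) - t ≠ 0 := sub_ne_zero.mpr (ne_of_gt (by linarith [ht.2]))
    have hbase : HasDerivAt (fun y : ℝ => y ^ κ) (κ * (1 - t) ^ (κ - 1)) (1 - t) :=
      Real.hasDerivAt_rpow_const (Or.inl h1t)
    have hinner : HasDerivAt (fun y : ℝ => 1 - y) (-1) t := by
      simpa using (hasDerivAt_id t).const_sub 1
    have h1 : HasDerivAt (fun t : ℝ => (1 - t) ^ κ) (-(κ * (1 - t) ^ (κ - 1))) t := by
      have := hbase.comp t hinner
      rw [mul_neg_one] at this; exact this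
    have hmul : HasDerivAt (fun t : ℝ => t * x) x t := by
      simpa using (hasDerivAt_id t).mul_const x
    have h2 : HasDerivAt (fun t : ℝ => f (t * x) - f 0) (x • deriv f (t * x)) t := by
      have := ((hd (t * x)).scomp t hmul).sub_const (f 0)
      simpa using this
    exact ((h1.smul h2).hasDerivWithinAt)
  have hi1 : IntervalIntegrable
      (fun t => ((1 - t) ^ κ : ℝ) • (x • deriv f (t * x))) volume 0 1 :=
    smulII (by linarith) hg'
  have hi2 : IntervalIntegrable
      (fun t => (-(κ * (1 - t) ^ (κ - 1))) • (f (t * x) - f 0)) volume 0 1 := by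
    have h := (smulII (show (-1:ℝ) < κ - 1 by linarith) hg).smul (-κ : ℝ)
    have heq : (fun t => (-(κ * (1 - t) ^ (κ - 1))) • (f (t * x) - f 0))
        = ((-κ : ℝ) • fun t => ((1 - t) ^ (κ - 1) : ℝ) • (f (t * x) - f 0)) := by
      funext t; simp [smul_smul, neg_mul, mul_assoc]
    rw [heq]; exact h
  have hint : IntervalIntegrable u' volume 0 1 := hi1.add hi2
  have hFTC := intervalIntegral.integral_eq_sub_of_hasDeriv_right_of_le zero_le_one
    hcont hderiv hint
  have hu1 : u 1 = 0 := by simp [hu, Real.zero_rpow hκ.ne']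
  have hu0 : u 0 = 0 := by simp [hu]
  rw [hu1, hu0, sub_zero] at hFTC
  -- split the integral
  rw [intervalIntegral.integral_add hi1 hi2] at hFTC
  have e1 : (∫ t in (0:ℝ)..1, ((1 - t) ^ κ : ℝ) • (x • deriv f (t * x)))
      = x • ∫ t in (0:ℝ)..1, ((1 - t) ^ κ : ℝ) • deriv f (t * x) := by
    rw [← intervalIntegral.integral_smul]
    apply intervalIntegral.integral_congr
    intro t _
    exact smul_comm _ _ _
  have e2 : (∫ t in (0:ℝ)..1, (-(κ * (1 - t) ^ (κ - 1))) • (f (t * x) - f 0))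
      = (-κ : ℝ) • ∫ t in (0:ℝ)..1, ((1 - t) ^ (κ - 1) : ℝ) • (f (t * x) - f 0) := by
    rw [← intervalIntegral.integral_smul]
    apply intervalIntegral.integral_congr
    intro t _
    simp [smul_smul, neg_mul, mul_assoc]
  rw [e1, e2] at hFTC
  have h3 := eq_neg_of_add_eq_zero_right hFTC
  have h4 := congrArg Neg.neg h3
  rw [neg_neg] at h4
  rw [← h4, neg_smul, neg_neg]

/-- The one-variable Dunkl-type operator with projection term,
extended by continuity at `x = 0` by the value `(1 + κ) g'(0)`. -/
noncomputable def Tkappa (κ : ℂ) (g : ℝ → ℂ) (x : ℝ) : ℂ :=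
  if x = 0 then (1 + κ) * deriv g 0 else deriv g x + κ * (g x - g 0) / x

/-- The one-variable intertwining operator `χ_κ`. -/
noncomputable def chiKappa (κ : ℝ) (f : ℝ → ℂ) (x : ℝ) : ℂ :=
  (Real.Gamma κ)⁻¹ • ∫ t in (0:ℝ)..1, ((1 - t) ^ (κ - 1) : ℝ) • f (t * x)

theorem chiKappa_intertwines (κ : ℝ) (hκ : 0 < κ) (f : ℝ → ℂ) (hf : ContDiff ℝ (⊤ : ℕ∞) f) :
    ∀ x : ℝ, Tkappa (κ : ℂ) (chiKappa κ f) x = chiKappa κ (deriv f) x := by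
  intro x
  have hcf : Continuous f := hf.continuous
  have hcf' : Continuous (deriv f) := hf.continuous_deriv (by simp)
  set c : ℝ := (Real.Gamma κ)⁻¹ with hc
  have hG : ∀ x₀ : ℝ, HasDerivAt (chiKappa κ f)
      (c • ∫ t in (0:ℝ)..1, ((1 - t) ^ (κ - 1) : ℝ) • (t • deriv f (t * x₀))) x₀ :=
    fun x₀ => (hasDerivI hκ hf x₀).const_smul c
  by_cases hx0 : x = 0
  · subst hx0
    rw [Tkappa, if_pos rfl, (hG 0).deriv]
    have e1 : (∫ t in (0:ℝ)..1, ((1 - t) ^ (κ - 1) : ℝ) • (t • deriv f (t * 0)))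
        = ((∫ t in (0:ℝ)..1, (1 - t) ^ (κ - 1) * t : ℝ)) • deriv f 0 := by
      rw [← intervalIntegral.integral_smul_const]
      apply intervalIntegral.integral_congr
      intro t _
      show ((1 - t) ^ (κ - 1) : ℝ) • (t • deriv f (t * 0)) = ((1 - t) ^ (κ - 1) * t) • deriv f 0
      rw [mul_zero, smul_smul]
    have e2 : chiKappa κ (deriv f) 0
        = c • (((∫ t in (0:ℝ)..1, (1 - t) ^ (κ - 1) : ℝ)) • deriv f 0) := by
      rw [chiKappa, ← hc, ← intervalIntegral.integral_smul_const]
      congr 1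
      apply intervalIntegral.integral_congr
      intro t _
      show ((1 - t) ^ (κ - 1) : ℝ) • deriv f (t * 0) = ((1 - t) ^ (κ - 1)) • deriv f 0
      rw [mul_zero]
    rw [e1, e2, J2 hκ, J1 hκ]
    have hκC : (κ : ℂ) ≠ 0 := by exact_mod_cast hκ.ne'
    have hκ1C : (κ : ℂ) + 1 ≠ 0 := by
      have h := Complex.ofReal_ne_zero.mpr (show (κ + 1 : ℝ) ≠ 0 by positivity)
      push_cast at h
      exact h
    simp only [Complex.real_smul]
    push_cast
    field_simp
    ring
  · rw [Tkappa, if_neg hx0, (hG x).deriv]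
    set D : ℂ := ∫ t in (0:ℝ)..1, ((1 - t) ^ (κ - 1) : ℝ) • (t • deriv f (t * x)) with hD
    set B : ℂ := ∫ t in (0:ℝ)..1, ((1 - t) ^ κ : ℝ) • deriv f (t * x) with hB
    set E : ℂ := ∫ t in (0:ℝ)..1, ((1 - t) ^ (κ - 1) : ℝ) • deriv f (t * x) with hE
    set S : ℂ := ∫ t in (0:ℝ)..1, ((1 - t) ^ (κ - 1) : ℝ) • (f (t * x) - f 0) with hS
    have hGx : chiKappa κ f x - chiKappa κ f 0 = c • S := by
      rw [chiKappa, chiKappa, ← hc, ← smul_sub]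
      congr 1
      rw [← intervalIntegral.integral_sub
          (smulII (r := κ - 1) (by linarith) (g := fun t => f (t * x))
            (by exact hcf.comp (continuous_id.mul continuous_const)))
          (smulII (r := κ - 1) (by linarith) (g := fun t => f (t * 0))
            (by exact hcf.comp (continuous_id.mul continuous_const)))]
      apply intervalIntegral.integral_congr
      intro t _
      show ((1 - t) ^ (κ - 1) : ℝ) • f (t * x) - ((1 - t) ^ (κ - 1) : ℝ) • f (t * 0)
        = ((1 - t) ^ (κ - 1) : ℝ) • (f (t * x) - f 0)
      rw [mul_zero, smul_sub]
    have hIBP : (κ : ℂ) * S = (x : ℂ) * B := by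
      have := IBP hκ hf x
      rw [← hS, ← hB] at this
      simpa [Complex.real_smul] using this
    have hDB : D + B = E := by
      rw [hD, hB, hE, ← intervalIntegral.integral_add
        (smulII (r := κ - 1) (show (-1:ℝ) < κ - 1 by linarith)
          (g := fun t => t • deriv f (t * x))
          (by exact continuous_id.smul (hcf'.comp (continuous_id.mul continuous_const))))
        (smulII (r := κ) (show (-1:ℝ) < κ by linarith)
          (g := fun t => deriv f (t * x))
          (by exact hcf'.comp (continuous_id.mul continuous_const)))]
      apply intervalIntegral.integral_congr
      intro t ht
      rw [uIcc_of_le zero_le_one, mem_Icc] at ht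
      show ((1 - t) ^ (κ - 1) : ℝ) • (t • deriv f (t * x)) + ((1 - t) ^ κ : ℝ) • deriv f (t * x)
        = ((1 - t) ^ (κ - 1) : ℝ) • deriv f (t * x)
      rcases eq_or_ne t 1 with rfl | ht1
      · norm_num [Real.zero_rpow hκ.ne']
      · have h1t : (1:ℝ) - t ≠ 0 := sub_ne_zero.mpr (Ne.symm ht1)
        have hpow : ((1 - t) ^ κ : ℝ) = (1 - t) ^ (κ - 1) * (1 - t) := by
          rw [show κ = (κ - 1) + 1 by ring, Real.rpow_add_one h1t]
          ring_nf
        rw [hpow, smul_smul, ← add_smul]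
        congr 1
        ring
    rw [hGx]
    have hxC : (x : ℂ) ≠ 0 := Complex.ofReal_ne_zero.mpr hx0
    rw [chiKappa, ← hc, ← hE]
    simp only [Complex.real_smul]
    rw [← hDB]
    field_simp
    linear_combination (c : ℂ) * hIBP
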